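/- Let G = (A ∪ B, E) be a bipartite instance with strict preference lists, M a popular matching in G, and α ∈ {0,±1}^{A∪B} a witness of M. If u is a vertex that is left unmatched in some stable matching of G, then α_u = cost_M(u,u); thus α_u = 0 if u is unmatched in M and α_u = −1 if u is matched in M. -/

import Mathlib

open scoped Classical

/-- A roommates instance: a (finite) graph `(V, adj)` together with a raw preference
relation: `pref u v w` means vertex `u` strictly prefers its neighbor `v` to its
neighbor `w`. -/
structure RoommatesInstance (V : Type) where
  adj : V → V → Prop
  adj_symm : ∀ u v, adj u v → adj v u
  adj_irrefl : ∀ u, ¬ adj u u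
  pref : V → V → V → Prop

namespace RoommatesInstance

variable {V : Type}

/-- The preference relation of each vertex is a strict linear order on its neighbors. -/
def StrictPrefs (G : RoommatesInstance V) : Prop :=
  (∀ u v w, G.pref u v w → G.adj u v ∧ G.adj u w) ∧
  (∀ u v w x, G.pref u v w → G.pref u w x → G.pref u v x) ∧
  (∀ u v w, G.pref u v w → ¬ G.pref u w v) ∧
  (∀ u v w, G.adj u v → G.adj u w → v ≠ w → G.pref u v w ∨ G.pref u w v)

/-- A matching, encoded by the partner function of the corresponding perfect matching
`M̃` of `G̃` (the graph `G` with a self-loop added at every vertex): `m u = u` means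
that `u` is unmatched in `M`, i.e. matched to itself along its self-loop in `M̃`. -/
structure Matching (G : RoommatesInstance V) where
  m : V → V
  invol : ∀ u, m (m u) = u
  adj_of_ne : ∀ u, m u ≠ u → G.adj u (m u)

variable (G : RoommatesInstance V)

/-- `u` considers `v` strictly better than `w`, where each of `v`, `w` is either a
neighbor of `u` or `u` itself (`u` itself stands for being unmatched, which every
vertex ranks below all of its neighbors). -/
def Better (u v w : V) : Prop :=
  (w = u ∧ v ≠ u) ∨ (v ≠ u ∧ w ≠ u ∧ G.pref u v w)

/-- vertex `u` prefers matching `M` to matching `M'` -/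
def Prefers (M M' : G.Matching) (u : V) : Prop :=
  G.Better u (M.m u) (M'.m u)

/-- `φ(M,M')`: the number of vertices preferring `M` to `M'` -/
noncomputable def phi [Fintype V] (M M' : G.Matching) : ℕ :=
  (Finset.univ.filter fun u => G.Prefers M M' u).card

/-- `Δ(M,M') = φ(M,M') - φ(M',M)` -/
noncomputable def delta [Fintype V] (M M' : G.Matching) : ℤ :=
  (G.phi M M' : ℤ) - (G.phi M' M : ℤ)

/-- a matching `M` is popular if it never loses a head-to-head election -/
def Popular [Fintype V] (M : G.Matching) : Prop :=
  ∀ M' : G.Matching, 0 ≤ G.delta M M'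

/-- `(u,v)` is a blocking edge to `M`: both endpoints prefer each other to their
assignments in `M̃`. -/
def Blocks (M : G.Matching) (u v : V) : Prop :=
  G.adj u v ∧ G.Better u v (M.m u) ∧ G.Better v u (M.m v)

/-- `(u,v)` is a negative edge to `M`: both endpoints prefer their assignments in `M̃`
to each other. -/
def Negative (M : G.Matching) (u v : V) : Prop :=
  G.adj u v ∧ G.Better u (M.m u) v ∧ G.Better v (M.m v) u

/-- `cost_M` on the edges of `G̃`: `cost_M(u,v) = 2` for a blocking edge, `-2` for a
negative edge, `0` otherwise; `cost_M(u,u) = 0` if `u` is unmatched in `M` and `-1`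
otherwise. -/
noncomputable def cost (M : G.Matching) (u v : V) : ℤ :=
  if u = v then (if M.m u = u then 0 else -1)
  else if G.Blocks M u v then 2
  else if G.Negative M u v then -2
  else 0

/-- a stable matching: no blocking edge -/
def Stable (M : G.Matching) : Prop := ∀ u v, ¬ G.Blocks M u v

/-- the number of edges of a matching -/
noncomputable def msize [Fintype V] (M : G.Matching) : ℕ :=
  (Finset.univ.filter fun u => M.m u ≠ u).card / 2

theorem cost_comm (M : G.Matching) (u v : V) : G.cost M u v = G.cost M v u := by
  unfold cost
  rcases eq_or_ne u v with rfl | huv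
  · rfl
  · rw [if_neg huv, if_neg (Ne.symm huv)]
    have hb : G.Blocks M u v ↔ G.Blocks M v u :=
      ⟨fun ⟨h1, h2, h3⟩ => ⟨G.adj_symm _ _ h1, h3, h2⟩,
       fun ⟨h1, h2, h3⟩ => ⟨G.adj_symm _ _ h1, h3, h2⟩⟩
    have hn : G.Negative M u v ↔ G.Negative M v u :=
      ⟨fun ⟨h1, h2, h3⟩ => ⟨G.adj_symm _ _ h1, h3, h2⟩,
       fun ⟨h1, h2, h3⟩ => ⟨G.adj_symm _ _ h1, h3, h2⟩⟩
    simp only [hb, hn]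

end RoommatesInstance

namespace RoommatesInstance

variable {V : Type} (G : RoommatesInstance V)

/-- A witness of the popularity of `M`: an optimal dual solution, i.e. a vector `α`
with `Σ_u α_u = 0`, `α_u + α_v ≥ cost_M(u,v)` for every edge `(u,v)` and
`α_u ≥ cost_M(u,u)` for every vertex `u`. -/
def IsWitness [Fintype V] (M : G.Matching) (α : V → ℝ) : Prop :=
  (∑ u, α u) = 0 ∧
  (∀ u v, G.adj u v → (G.cost M u v : ℝ) ≤ α u + α v) ∧
  (∀ u, (G.cost M u u : ℝ) ≤ α u)

/-- `(u,v)` is a popular edge: it belongs to some popular matching of `G`. -/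
def PopularEdge [Fintype V] (u v : V) : Prop :=
  u ≠ v ∧ ∃ N : G.Matching, G.Popular N ∧ N.m u = v

/-- `u` is an unstable vertex: it is left unmatched in some stable matching of `G`. -/
def Unstable (u : V) : Prop :=
  ∃ S : G.Matching, G.Stable S ∧ S.m u = u

/-- `u` and `v` lie in the same connected component of the popular subgraph `F_G`
(the subgraph of `G` on the popular edges). -/
def PopConn [Fintype V] : V → V → Prop :=
  Relation.ReflTransGen (G.PopularEdge)

end RoommatesInstance

namespace RoommatesInstance

variable {V : Type} (G : RoommatesInstance V)

/-- the vote of a vertex in the head-to-head election between `N` and `M` -/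
noncomputable def vote (N M : G.Matching) (u : V) : ℤ :=
  (if G.Prefers N M u then 1 else 0) - (if G.Prefers M N u then 1 else 0)

lemma better_irrefl (hG : G.StrictPrefs) (u v : V) : ¬ G.Better u v v := by
  rintro (⟨h1, h2⟩ | ⟨h1, h2, h3⟩)
  · exact h2 h1
  · exact hG.2.2.1 u v v h3 h3

lemma better_asymm (hG : G.StrictPrefs) {u v w : V} (h : G.Better u v w) :
    ¬ G.Better u w v := by
  rintro (⟨h1, h2⟩ | ⟨h1, h2, h3⟩)
  · rcases h with (⟨g1, g2⟩ | ⟨g1, g2, g3⟩)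
    · exact g2 h1
    · exact g1 h1
  · rcases h with (⟨g1, g2⟩ | ⟨g1, g2, g3⟩)
    · exact h1 g1
    · exact hG.2.2.1 u w v h3 g3

lemma better_total (hG : G.StrictPrefs) {u v w : V}
    (hv : v = u ∨ G.adj u v) (hw : w = u ∨ G.adj u w) (hne : v ≠ w) :
    G.Better u v w ∨ G.Better u w v := by
  rcases hw with hw | hw
  · subst hw
    exact Or.inl (Or.inl ⟨rfl, hne⟩)
  · rcases hv with hv | hv
    · subst hv
      exact Or.inr (Or.inl ⟨rfl, fun e => hne e.symm⟩)
    · have hvu : v ≠ u := fun e => G.adj_irrefl u (e ▸ hv)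
      have hwu : w ≠ u := fun e => G.adj_irrefl u (e ▸ hw)
      rcases hG.2.2.2 u v w hv hw hne with h | h
      · exact Or.inl (Or.inr ⟨hvu, hwu, h⟩)
      · exact Or.inr (Or.inr ⟨hwu, hvu, h⟩)

lemma vote_fixed (N M : G.Matching) (u : V) (h : N.m u = u) :
    G.vote N M u = G.cost M u u := by
  by_cases hm : M.m u = u <;>
    simp [vote, Prefers, Better, cost, h, hm]

lemma vote_pair (hG : G.StrictPrefs) (N M : G.Matching) (u : V) (h : N.m u ≠ u) :
    G.vote N M u + G.vote N M (N.m u) = G.cost M u (N.m u) := by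
  have hvu : N.m (N.m u) = u := N.invol u
  have hadj : G.adj u (N.m u) := N.adj_of_ne u h
  have hadj' : G.adj (N.m u) u := G.adj_symm _ _ hadj
  have huv : u ≠ N.m u := fun e => h e.symm
  have eP1 : G.Prefers N M u = G.Better u (N.m u) (M.m u) := rfl
  have eQ1 : G.Prefers M N u = G.Better u (M.m u) (N.m u) := rfl
  have eP2 : G.Prefers N M (N.m u) = G.Better (N.m u) u (M.m (N.m u)) := by
    unfold Prefers; rw [hvu]
  have eQ2 : G.Prefers M N (N.m u) = G.Better (N.m u) (M.m (N.m u)) u := by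
    unfold Prefers; rw [hvu]
  by_cases hm : M.m u = N.m u
  · have hmv : M.m (N.m u) = u := by rw [← hm, M.invol]
    have c0 : G.cost M u (N.m u) = 0 := by
      have hb : ¬ G.Blocks M u (N.m u) := by
        rintro ⟨-, hP1, -⟩
        rw [hm] at hP1
        exact G.better_irrefl hG _ _ hP1
      have hn : ¬ G.Negative M u (N.m u) := by
        rintro ⟨-, hQ1, -⟩
        rw [hm] at hQ1
        exact G.better_irrefl hG _ _ hQ1
      simp [cost, huv, hb, hn]
    rw [c0]
    have hn1 : ¬ G.Prefers N M u := by rw [eP1, hm]; exact G.better_irrefl hG _ _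
    have hn2 : ¬ G.Prefers M N u := by rw [eQ1, hm]; exact G.better_irrefl hG _ _
    have hn3 : ¬ G.Prefers N M (N.m u) := by rw [eP2, hmv]; exact G.better_irrefl hG _ _
    have hn4 : ¬ G.Prefers M N (N.m u) := by rw [eQ2, hmv]; exact G.better_irrefl hG _ _
    simp [vote, hn1, hn2, hn3, hn4]
  · have hm2 : M.m (N.m u) ≠ u := by
      intro e
      have h2 := M.invol (N.m u)
      rw [e] at h2
      exact hm h2
    have htri1 : G.Better u (N.m u) (M.m u) ∨ G.Better u (M.m u) (N.m u) := by
      apply G.better_total hG (Or.inr hadj)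
      · by_cases hmu : M.m u = u
        · exact Or.inl hmu
        · exact Or.inr (M.adj_of_ne u hmu)
      · exact fun e => hm e.symm
    have htri2 : G.Better (N.m u) u (M.m (N.m u)) ∨
        G.Better (N.m u) (M.m (N.m u)) u := by
      apply G.better_total hG (Or.inr hadj')
      · by_cases hmv : M.m (N.m u) = N.m u
        · exact Or.inl hmv
        · exact Or.inr (M.adj_of_ne _ hmv)
      · exact fun e => hm2 e.symm
    rcases htri1 with hP1 | hQ1 <;> rcases htri2 with hP2 | hQ2
    · -- blocking edge
      have hb : G.Blocks M u (N.m u) := ⟨hadj, hP1, hP2⟩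
      have c2 : G.cost M u (N.m u) = 2 := by simp [cost, huv, hb]
      rw [c2]
      simp [vote, Prefers, hvu, hP1, hP2,
        G.better_asymm hG hP1, G.better_asymm hG hP2]
    · have hnb : ¬ G.Blocks M u (N.m u) := by
        rintro ⟨-, -, hP2⟩
        exact G.better_asymm hG hQ2 hP2
      have hnn : ¬ G.Negative M u (N.m u) := by
        rintro ⟨-, hQ1, -⟩
        exact G.better_asymm hG hP1 hQ1
      have c0 : G.cost M u (N.m u) = 0 := by simp [cost, huv, hnb, hnn]
      rw [c0]
      simp [vote, Prefers, hvu, hP1, hQ2,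
        G.better_asymm hG hP1, G.better_asymm hG hQ2]
    · have hnb : ¬ G.Blocks M u (N.m u) := by
        rintro ⟨-, hP1, -⟩
        exact G.better_asymm hG hQ1 hP1
      have hnn : ¬ G.Negative M u (N.m u) := by
        rintro ⟨-, -, hQ2⟩
        exact G.better_asymm hG hP2 hQ2
      have c0 : G.cost M u (N.m u) = 0 := by simp [cost, huv, hnb, hnn]
      rw [c0]
      simp [vote, Prefers, hvu, hQ1, hP2,
        G.better_asymm hG hQ1, G.better_asymm hG hP2]
    · have hnb : ¬ G.Blocks M u (N.m u) := by
        rintro ⟨-, hP1, -⟩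
        exact G.better_asymm hG hQ1 hP1
      have hn : G.Negative M u (N.m u) := ⟨hadj, hQ1, hQ2⟩
      have c2 : G.cost M u (N.m u) = -2 := by simp [cost, huv, hnb, hn]
      rw [c2]
      simp [vote, Prefers, hvu, hQ1, hQ2,
        G.better_asymm hG hQ1, G.better_asymm hG hQ2]

lemma sum_vote_eq_delta [Fintype V] (N M : G.Matching) :
    ∑ u, G.vote N M u = G.delta N M := by
  unfold vote delta phi
  rw [Finset.sum_sub_distrib]
  simp [Finset.sum_boole]

lemma sum_invol_filter_nonneg {R : Type*} [CommRing R] [LinearOrder R] [IsStrictOrderedRing R] [Fintype V]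
    (σ : V → V) (hσ : ∀ u, σ (σ u) = u) (f : V → R)
    (h2 : ∀ u, σ u ≠ u → 0 ≤ f u + f (σ u)) :
    0 ≤ ∑ u ∈ Finset.univ.filter (fun u => ¬ σ u = u), f u := by
  set t := Finset.univ.filter (fun u => ¬ σ u = u) with ht
  have hinv : Function.Involutive σ := hσ
  have hperm : ∑ u ∈ t, f (σ u) = ∑ u ∈ t, f u := by
    apply Finset.sum_nbij' σ σ
    · intro a ha
      simp only [ht, Finset.mem_filter, Finset.mem_univ, true_and] at ha ⊢
      intro e
      exact ha (by rw [← hσ a, e, e])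
    · intro a ha
      simp only [ht, Finset.mem_filter, Finset.mem_univ, true_and] at ha ⊢
      intro e
      exact ha (by rw [← hσ a, e, e])
    · intro a _; exact hσ a
    · intro a _; exact hσ a
    · intro a _; rfl
  have h2t : 0 ≤ ∑ u ∈ t, (f u + f (σ u)) := by
    apply Finset.sum_nonneg
    intro i hi
    simp only [ht, Finset.mem_filter, Finset.mem_univ, true_and] at hi
    exact h2 i hi
  rw [Finset.sum_add_distrib, hperm] at h2t
  linarith

lemma sum_invol_tight {R : Type*} [CommRing R] [LinearOrder R] [IsStrictOrderedRing R] [Fintype V]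
    (σ : V → V) (hσ : ∀ u, σ (σ u) = u) (f : V → R)
    (h1 : ∀ u, σ u = u → 0 ≤ f u) (h2 : ∀ u, σ u ≠ u → 0 ≤ f u + f (σ u))
    (hsum : ∑ u, f u = 0) (u0 : V) (h0 : σ u0 = u0) : f u0 = 0 := by
  have hsplit := Finset.sum_filter_add_sum_filter_not Finset.univ
    (fun u => σ u = u) f
  have ht := sum_invol_filter_nonneg σ hσ f h2
  have hs1 : ∀ i ∈ Finset.univ.filter (fun u => σ u = u), 0 ≤ f i := by
    intro i hi
    simp only [Finset.mem_filter, Finset.mem_univ, true_and] at hi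
    exact h1 i hi
  have hs0 : ∑ u ∈ Finset.univ.filter (fun u => σ u = u), f u = 0 := by
    have hge := Finset.sum_nonneg hs1
    rw [hsum] at hsplit
    linarith
  have := (Finset.sum_eq_zero_iff_of_nonneg hs1).1 hs0 u0
  exact this (by simp [h0])

lemma delta_stable_eq_zero [Fintype V] (hG : G.StrictPrefs) (M S : G.Matching)
    (hM : G.Popular M) (hS : G.Stable S) : ∑ u, G.vote S M u = 0 := by
  have h1 : 0 ≤ G.delta M S := hM S
  have h2 : 0 ≤ ∑ u, (fun u => - G.vote M S u) u := by
    have hsplit := Finset.sum_filter_add_sum_filter_not Finset.univ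
      (fun u => M.m u = u) (fun u => - G.vote M S u)
    have ht := sum_invol_filter_nonneg M.m M.invol (fun u => - G.vote M S u)
      (by
        intro u hu
        have := G.vote_pair hG M S u hu
        have hc : G.cost S u (M.m u) ≤ 0 := by
          have hne : u ≠ M.m u := fun e => hu e.symm
          have hb : ¬ G.Blocks S u (M.m u) := hS u (M.m u)
          by_cases hn : G.Negative S u (M.m u) <;>
            simp [cost, hne, hb, hn]
        show (0:ℤ) ≤ - G.vote M S u + - G.vote M S (M.m u)
        linarith)
    have hs : 0 ≤ ∑ u ∈ Finset.univ.filter (fun u => M.m u = u),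
        (fun u => - G.vote M S u) u := by
      apply Finset.sum_nonneg
      intro i hi
      simp only [Finset.mem_filter, Finset.mem_univ, true_and] at hi
      have := G.vote_fixed M S i hi
      have hc : G.cost S i i ≤ 0 := by
        by_cases hsi : S.m i = i <;> simp [cost, hsi]
      show (0:ℤ) ≤ - G.vote M S i
      linarith
    linarith
  have h3 : ∑ u, G.vote M S u ≤ 0 := by
    rw [Finset.sum_neg_distrib] at h2
    linarith
  rw [G.sum_vote_eq_delta] at h3
  have h4 : G.delta M S = 0 := le_antisymm h3 h1
  rw [G.sum_vote_eq_delta]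
  unfold delta at h4 ⊢
  linarith

end RoommatesInstance

open RoommatesInstance in
/-- Let `M` be a popular matching of a bipartite instance `G` and
`α ∈ {0,±1}^{A∪B}` a witness of `M`.  If `u` is left unmatched in some stable
matching of `G`, then `α_u = cost_M(u,u)`; thus `α_u = 0` if `u` is unmatched in `M`
and `α_u = -1` if `u` is matched in `M`. -/
theorem witness_at_unstable_vertex {V : Type} [Fintype V]
    (G : RoommatesInstance V) (hG : G.StrictPrefs)
    (A : Set V) (hbip : ∀ u v, G.adj u v → (u ∈ A ↔ v ∉ A))
    (M : G.Matching) (hM : G.Popular M)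
    (α : V → ℝ) (hα : G.IsWitness M α)
    (h01 : ∀ u, α u = 0 ∨ α u = 1 ∨ α u = -1)
    (u : V) (hu : G.Unstable u) :
    α u = (G.cost M u u : ℝ) ∧
      (M.m u = u → α u = 0) ∧ (M.m u ≠ u → α u = -1) := by
  obtain ⟨S, hS, hSu⟩ := hu
  obtain ⟨hsum, hedge, hvert⟩ := hα
  set f : V → ℝ := fun w => α w - (G.vote S M w : ℝ) with hf
  have hvsum : ∑ w, G.vote S M w = 0 := G.delta_stable_eq_zero hG M S hM hS
  have hfsum : ∑ w, f w = 0 := by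
    simp only [hf]
    rw [Finset.sum_sub_distrib, hsum]
    rw [← Int.cast_sum, hvsum]
    simp
  have h1 : ∀ w, S.m w = w → 0 ≤ f w := by
    intro w hw
    have hv := G.vote_fixed S M w hw
    have := hvert w
    simp only [hf, hv]
    linarith
  have h2 : ∀ w, S.m w ≠ w → 0 ≤ f w + f (S.m w) := by
    intro w hw
    have hv := G.vote_pair hG S M w hw
    have hadj : G.adj w (S.m w) := S.adj_of_ne w hw
    have := hedge w (S.m w) hadj
    have hcast : ((G.vote S M w : ℤ) : ℝ) + ((G.vote S M (S.m w) : ℤ) : ℝ)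
        = ((G.cost M w (S.m w) : ℤ) : ℝ) := by
      rw [← Int.cast_add, hv]
    simp only [hf]
    linarith
  have hfu : f u = 0 := sum_invol_tight S.m S.invol f h1 h2 hfsum u hSu
  have hvu := G.vote_fixed S M u hSu
  have hmain : α u = (G.cost M u u : ℝ) := by
    have : α u = ((G.vote S M u : ℤ) : ℝ) := by
      simp only [hf] at hfu
      linarith
    rw [this, hvu]
  refine ⟨hmain, ?_, ?_⟩
  · intro h
    rw [hmain]
    simp [RoommatesInstance.cost, h]
  · intro h
    rw [hmain]
    simp [RoommatesInstance.cost, h]
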